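/- arXiv:math/0608092 — 2 statements merged into one kernel-verified Lean document; each statement's English description precedes it below -/
import Mathlib

section
/- Let u : ℝ² → ℝ be a C² function solving L_u(L_u u) = 0 on ℝ², and let A, B, x(c,t) be as above. Then for every fixed t ∈ ℝ, the map c ↦ x(c,t) is strictly increasing on ℝ; in particular, the characteristic parabolas t ↦ (x(c,t), t) corresponding to distinct values of c never intersect. -/
/-!
Along the parabola `s ↦ (x(c,s), s)` put `G = u - (A s + B)` and `H = L_u u - A`. Since
`L_u (L_u u) = 0`, the chain rule gives the linear system `G' = H - u_x G`, `H' = -(L_u u)_x G`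
with `G(0) = H(0) = 0`, so `G = H = 0` by uniqueness for linear ODEs. Thus `u` and `L_u u` are
determined along each characteristic parabola by its starting point, so two parabolas meeting at a
point share `A`, `B` and then `c`. Non-crossing continuous curves starting in increasing order stay
in increasing order.
-/

/-- The operator `L_u` acting on `v`:  `(L_u v)(x,t) = ∂v/∂t + u·∂v/∂x`,
with coordinates `(x,t)` on `ℝ × ℝ`. -/
noncomputable def Lop (u v : ℝ × ℝ → ℝ) : ℝ × ℝ → ℝ :=
  fun p => fderiv ℝ v p (0, 1) + u p * fderiv ℝ v p (1, 0)

open Set Function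

/-- `x(c,t)`, with `a = A(c)` and `b = B(c)`. -/
noncomputable def charParabola (a b c t : ℝ) : ℝ := a / 2 * t ^ 2 + b * t + c

theorem hasDerivAt_charParabola (a b c t : ℝ) :
    HasDerivAt (charParabola a b c) (a * t + b) t := by
  have h := ((((hasDerivAt_id' t).pow 2).const_mul (a / 2)).add
    ((hasDerivAt_id' t).const_mul b)).add_const c
  exact h.congr_deriv (by norm_num; ring)

theorem continuous_charParabola (a b c : ℝ) : Continuous (charParabola a b c) := by
  unfold charParabola
  fun_prop

theorem ODE_linear_solution_eq_zero {E : Type*} [NormedAddCommGroup E] [NormedSpace ℝ E]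
    {L : ℝ → E →L[ℝ] E} (hL : Continuous L) {y : ℝ → E}
    (hy : ∀ s, HasDerivAt y (L s (y s)) s) {t₀ : ℝ} (h₀ : y t₀ = 0) (t : ℝ) : y t = 0 := by
  set R := |t₀| + |t| + 1
  have ht₀ : t₀ ∈ Ioo (-R) R := abs_lt.mp (by linarith [abs_nonneg t])
  have ht : t ∈ Ioo (-R) R := abs_lt.mp (by linarith [abs_nonneg t₀])
  obtain ⟨K, hK⟩ := (isCompact_Icc (a := -R) (b := R)).exists_bound_of_continuousOn hL.continuousOn
  have hlip : ∀ s ∈ Ioo (-R) R, LipschitzOnWith K.toNNReal (L s) univ := fun s hs =>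
    ((L s).lipschitz.weaken (by
      rw [← NNReal.coe_le_coe, coe_nnnorm, Real.coe_toNNReal']
      exact (hK s (Ioo_subset_Icc_self hs)).trans (le_max_left _ _))).lipschitzOnWith
  refine ODE_solution_unique_of_mem_Ioo (g := fun _ => 0) hlip ht₀
    (fun s _ => ⟨hy s, mem_univ _⟩) (fun s _ => ⟨?_, mem_univ _⟩) h₀ ht
  simpa only [map_zero] using hasDerivAt_const s (0 : E)

theorem ContDiff.Lop {n : WithTop ℕ∞} {u v : ℝ × ℝ → ℝ} (hu : ContDiff ℝ n u)
    (hv : ContDiff ℝ (n + 1) v) : ContDiff ℝ n (Lop u v) := by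
  have hv' : ContDiff ℝ n (fderiv ℝ v) := hv.fderiv_right le_rfl
  exact (hv'.clm_apply contDiff_const).add (hu.mul (hv'.clm_apply contDiff_const))

theorem hasDerivAt_comp_graph (u : ℝ × ℝ → ℝ) {f : ℝ × ℝ → ℝ} {ξ : ℝ → ℝ} {ξ' s : ℝ}
    (hξ : HasDerivAt ξ ξ' s) (hf : DifferentiableAt ℝ f (ξ s, s)) :
    HasDerivAt (fun s => f (ξ s, s))
      (Lop u f (ξ s, s) + (ξ' - u (ξ s, s)) * fderiv ℝ f (ξ s, s) (1, 0)) s := by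
  refine (hf.hasFDerivAt.comp_hasDerivAt (f := fun s => (ξ s, s)) s
    (hξ.prodMk (hasDerivAt_id s))).congr_deriv ?_
  have hsplit : ((ξ', 1) : ℝ × ℝ) = ξ' • ((1 : ℝ), (0 : ℝ)) + (0, 1) := by simp
  rw [hsplit, map_add, map_smul, smul_eq_mul, Lop]
  ring

theorem charParabola_characteristic {u : ℝ × ℝ → ℝ} (hu : ContDiff ℝ 2 u)
    (hpde : ∀ p, Lop u (Lop u u) p = 0) {a b c : ℝ} (ha : Lop u u (c, 0) = a)
    (hb : u (c, 0) = b) (t : ℝ) :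
    u (charParabola a b c t, t) = a * t + b ∧ Lop u u (charParabola a b c t, t) = a := by
  set w := Lop u u
  set ξ := charParabola a b c
  have hw : ContDiff ℝ 1 w := (hu.of_le (by norm_num)).Lop hu
  have hγ : Continuous fun s => (ξ s, s) := (continuous_charParabola a b c).prodMk continuous_id
  set P := fun s => fderiv ℝ u (ξ s, s) (1, 0)
  set Q := fun s => fderiv ℝ w (ξ s, s) (1, 0)
  have hP : Continuous P := ((hu.continuous_fderiv (by norm_num)).comp hγ).clm_apply continuous_const
  have hQ : Continuous Q := ((hw.continuous_fderiv one_ne_zero).comp hγ).clm_apply continuous_const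
  -- `L s (g, h) = (h - P s * g, -(Q s * g))`
  let L : ℝ → ℝ × ℝ →L[ℝ] ℝ × ℝ := fun s =>
    .inl ℝ ℝ ℝ ∘L .snd ℝ ℝ ℝ - P s • (.inl ℝ ℝ ℝ ∘L .fst ℝ ℝ ℝ) - Q s • (.inr ℝ ℝ ℝ ∘L .fst ℝ ℝ ℝ)
  have hL : Continuous L := by fun_prop
  set y := fun s => (u (ξ s, s) - (a * s + b), w (ξ s, s) - a)
  have hy : ∀ s, HasDerivAt y (L s (y s)) s := by
    intro s
    have hG := (hasDerivAt_comp_graph u (hasDerivAt_charParabola a b c s)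
      (hu.differentiable (by norm_num) _)).sub (((hasDerivAt_id s).const_mul a).add_const b)
    have hH := (hasDerivAt_comp_graph u (hasDerivAt_charParabola a b c s)
      (hw.differentiable one_ne_zero _)).sub_const a
    refine (hG.prodMk hH).congr_deriv ?_
    ext <;> simp [L, y, P, Q, hpde] <;> ring
  have hy0 : y 0 = 0 := by simp [y, ξ, charParabola, ha, hb]
  have hyt := ODE_linear_solution_eq_zero hL hy hy0 t
  simpa only [y, Prod.ext_iff, Prod.fst_zero, Prod.snd_zero, sub_eq_zero] using hyt

theorem eq_of_charParabola_eq {u : ℝ × ℝ → ℝ} (hu : ContDiff ℝ 2 u)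
    (hpde : ∀ p, Lop u (Lop u u) p = 0) {a b c a' b' c' t : ℝ} (ha : Lop u u (c, 0) = a)
    (hb : u (c, 0) = b) (ha' : Lop u u (c', 0) = a') (hb' : u (c', 0) = b')
    (h : charParabola a b c t = charParabola a' b' c' t) : c = c' := by
  obtain ⟨hu₁, hw₁⟩ := charParabola_characteristic hu hpde ha hb t
  obtain ⟨hu₂, hw₂⟩ := charParabola_characteristic hu hpde ha' hb' t
  rw [h] at hu₁ hw₁
  obtain rfl : a = a' := hw₁.symm.trans hw₂
  obtain rfl : b = b' := by linarith
  simpa only [charParabola, add_right_inj] using h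

theorem strictMono_of_injective_of_apply_zero {F : ℝ → ℝ → ℝ} (hF : ∀ c, Continuous (F c))
    (h₀ : ∀ c, F c 0 = c) (hinj : ∀ t, Injective (F · t)) (t : ℝ) : StrictMono (F · t) := by
  intro c c' hcc
  by_contra hle
  replace hle : F c' t - F c t ≤ 0 := sub_nonpos.2 (not_lt.1 hle)
  obtain ⟨s, -, hs⟩ : (0 : ℝ) ∈ (fun s => F c' s - F c s) '' uIcc 0 t :=
    intermediate_value_uIcc (f := fun s => F c' s - F c s) ((hF c').sub (hF c)).continuousOn
      (mem_uIcc.2 (Or.inr ⟨hle, by linarith [h₀ c, h₀ c']⟩))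
  exact hcc.ne (hinj s (sub_eq_zero.1 hs).symm)

theorem stmt2 (u : ℝ × ℝ → ℝ) (hu : ContDiff ℝ 2 u)
    (hpde : ∀ p : ℝ × ℝ, Lop u (Lop u u) p = 0)
    (A B : ℝ → ℝ) (hA : ∀ c, A c = Lop u u (c, 0)) (hB : ∀ c, B c = u (c, 0))
    (X : ℝ → ℝ → ℝ) (hX : ∀ c t, X c t = A c / 2 * t ^ 2 + B c * t + c) :
    (∀ t : ℝ, StrictMono fun c => X c t) ∧
    ∀ c c' : ℝ, c ≠ c' → ∀ t : ℝ, (X c t, t) ≠ (X c' t, t) := by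
  obtain rfl : X = fun c => charParabola (A c) (B c) c := funext₂ hX
  have hinj : ∀ t, Injective fun c => charParabola (A c) (B c) c t := fun t c c' h =>
    eq_of_charParabola_eq hu hpde (hA c).symm (hB c).symm (hA c').symm (hB c').symm h
  have hmono := strictMono_of_injective_of_apply_zero (fun c => continuous_charParabola _ _ c)
    (fun c => by simp [charParabola]) hinj
  exact ⟨hmono, fun c c' hne t h => hne (hinj t (congrArg Prod.fst h))⟩
end

section
/- Let A, B : ℝ → ℝ be C² functions such that for every c ∈ ℝ either (A'(c) = 0 and B'(c) = 0) or B'(c)² < 2·A'(c). Let F(c,t) := ((A(c)/2)·t² + B(c)·t + c, t), let Ω := F(ℝ²) (an open set on which F has an inverse of the form F⁻¹(x,t) = (c(x,t), t)), and define u : Ω → ℝ by u(x,t) := A(c(x,t))·t + B(c(x,t)). Then u is C² on Ω, satisfies L_u(L_u u) = 0 on Ω, u(x,0) = B(x) and (L_u u)(x,0) = A(x) for all x ∈ ℝ; moreover u is the unique C² function on Ω with these properties. -/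
open Set Topology

theorem hasDerivAt_comp_graph_s11 {w : ℝ × ℝ → ℝ} {γ : ℝ → ℝ} {γ' t : ℝ}
    (hγ : HasDerivAt γ γ' t) (hw : DifferentiableAt ℝ w (γ t, t)) :
    HasDerivAt (fun t => w (γ t, t))
      (fderiv ℝ w (γ t, t) (0, 1) + γ' * fderiv ℝ w (γ t, t) (1, 0)) t := by
  refine (hw.hasFDerivAt.comp_hasDerivAt_of_eq t (hγ.prodMk (hasDerivAt_id t)) rfl).congr_deriv ?_
  rw [show ((γ', 1) : ℝ × ℝ) = (0, 1) + γ' • (1, 0) by simp, map_add, map_smul, smul_eq_mul]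

theorem ContDiffOn.Lop {Ω : Set (ℝ × ℝ)} {m n : WithTop ℕ∞} {v w : ℝ × ℝ → ℝ}
    (hv : ContDiffOn ℝ n v Ω) (hw : ContDiffOn ℝ m w Ω) (hΩ : IsOpen Ω) (hmn : m + 1 ≤ n) :
    ContDiffOn ℝ m (Lop w v) Ω := by
  have hdv := hv.fderiv_of_isOpen hΩ hmn
  exact (hdv.clm_apply contDiffOn_const).add (hw.mul (hdv.clm_apply contDiffOn_const))

theorem eq_zero_of_linear_ODE {E : Type*} [NormedAddCommGroup E] [NormedSpace ℝ E]
    {M : ℝ → E →L[ℝ] E} (hM : Continuous M) {y : ℝ → E}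
    (hy : ∀ t, HasDerivAt y (M t (y t)) t) {t₀ : ℝ} (h₀ : y t₀ = 0) : y = 0 := by
  funext t
  obtain ⟨a, b, ht, ht₀⟩ : ∃ a b, t ∈ Ioo a b ∧ t₀ ∈ Ioo a b :=
    ⟨min t t₀ - 1, max t t₀ + 1, by constructor <;> constructor <;> grind⟩
  obtain ⟨C, hC⟩ := isCompact_Icc.exists_bound_of_continuousOn (hM.continuousOn (s := Icc a b))
  have hlip : ∀ s ∈ Ioo a b, LipschitzOnWith C.toNNReal (M s) univ := fun s hs =>
    ((M s).lipschitz.weaken (by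
      rw [← NNReal.coe_le_coe, coe_nnnorm, Real.coe_toNNReal']
      exact (hC s (Ioo_subset_Icc_self hs)).trans (le_max_left _ _))).lipschitzOnWith
  exact ODE_solution_unique_of_mem_Ioo hlip ht₀ (fun s _ => ⟨hy s, trivial⟩)
    (fun s _ => ⟨by simp, trivial⟩) h₀ ht

theorem apply_graph_eq_of_Lop_Lop_eq_zero {Ω : Set (ℝ × ℝ)} (hΩ : IsOpen Ω) {v : ℝ × ℝ → ℝ}
    (hv : ContDiffOn ℝ 2 v Ω) (hvv : ∀ p ∈ Ω, Lop v (Lop v v) p = 0) {γ : ℝ → ℝ} {α β : ℝ}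
    (hγΩ : ∀ t, (γ t, t) ∈ Ω) (hγ : ∀ t, HasDerivAt γ (α * t + β) t)
    (hv₀ : v (γ 0, 0) = β) (hvv₀ : Lop v v (γ 0, 0) = α) (t : ℝ) :
    v (γ t, t) = α * t + β := by
  set w := Lop v v
  have hw : ContDiffOn ℝ 1 w Ω := hv.Lop (hv.of_le one_le_two) hΩ le_rfl
  have hcurve : Continuous fun t => (γ t, t) :=
    (Differentiable.continuous fun t => (hγ t).differentiableAt).prodMk continuous_id
  set a := fun t => fderiv ℝ v (γ t, t) (1, 0)
  set b := fun t => fderiv ℝ w (γ t, t) (1, 0)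
  have ha : Continuous a :=
    ((hv.continuousOn_fderiv_of_isOpen hΩ one_le_two).comp_continuous hcurve hγΩ).clm_apply
      continuous_const
  have hb : Continuous b :=
    ((hw.continuousOn_fderiv_of_isOpen hΩ le_rfl).comp_continuous hcurve hγΩ).clm_apply
      continuous_const
  -- On the curve `γ' = v + e`, so `d/dt` differs from `L_v` by `e ∂ₓ`.
  set e := fun t => α * t + β - v (γ t, t)
  set f := fun t => α - w (γ t, t)
  have he : ∀ t, HasDerivAt e (f t - a t * e t) t := fun t => by
    have hvt := hasDerivAt_comp_graph_s11 (hγ t)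
      ((hv.differentiableOn two_ne_zero).differentiableAt (hΩ.mem_nhds (hγΩ t)))
    refine ((((hasDerivAt_id t).const_mul α).add_const β).sub hvt).congr_deriv ?_
    simp only [e, f, a, w, Lop]
    ring
  have hf : ∀ t, HasDerivAt f (-b t * e t) t := fun t => by
    have hwt := hasDerivAt_comp_graph_s11 (hγ t)
      ((hw.differentiableOn one_ne_zero).differentiableAt (hΩ.mem_nhds (hγΩ t)))
    refine ((hasDerivAt_const t α).sub hwt).congr_deriv ?_
    have := hvv _ (hγΩ t)
    simp only [e, b, Lop] at this ⊢
    linear_combination -this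
  set M : ℝ → (ℝ × ℝ) →L[ℝ] ℝ × ℝ := fun t =>
    (-a t • ContinuousLinearMap.fst ℝ ℝ ℝ + ContinuousLinearMap.snd ℝ ℝ ℝ).prod
      (-b t • ContinuousLinearMap.fst ℝ ℝ ℝ)
  have hM : Continuous M := continuous_clm_apply.2 fun y => by
    simp only [M, ContinuousLinearMap.prod_apply, add_apply,
      smul_apply, ContinuousLinearMap.coe_fst', ContinuousLinearMap.coe_snd']
    fun_prop
  have hef := eq_zero_of_linear_ODE hM (y := fun t => (e t, f t)) (t₀ := 0)
    (fun t => ((he t).prodMk (hf t)).congr_deriv (by simp [M]; ring))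
    (by simp [e, f, w, hv₀, hvv₀])
  have := congrArg Prod.fst (congrFun hef t)
  simp only [e, Pi.zero_apply, Prod.fst_zero] at this
  linarith

section InverseFunction

variable {𝕂 E F : Type*} [RCLike 𝕂] [NormedAddCommGroup E] [NormedSpace 𝕂 E] [CompleteSpace E]
  [NormedAddCommGroup F] [NormedSpace 𝕂 F] {n : WithTop ℕ∞} {f : E → F} {f' : E → E ≃L[𝕂] F}

theorem ContDiff.isOpen_range_of_hasFDerivAt_equiv (hf : ContDiff 𝕂 n f)
    (hf' : ∀ x, HasFDerivAt f (f' x : E →L[𝕂] F) x) (hn : n ≠ 0) : IsOpen (range f) :=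
  (isOpenMap_of_hasStrictFDerivAt_equiv fun x =>
    hf.contDiffAt.hasStrictFDerivAt' (hf' x) hn).isOpen_range

theorem ContDiff.contDiffOn_range_of_leftInverse (hf : ContDiff 𝕂 n f)
    (hf' : ∀ x, HasFDerivAt f (f' x : E →L[𝕂] F) x) (hn : n ≠ 0) {g : F → E}
    (hg : Function.LeftInverse g f) : ContDiffOn 𝕂 n g (range f) := by
  rintro _ ⟨x, rfl⟩
  have hfx := hf.contDiffAt (x := x)
  have hright : ∀ᶠ y in 𝓝 (f x), f (hfx.localInverse (hf' x) hn y) = y :=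
    (hfx.toOpenPartialHomeomorph f (hf' x) hn).eventually_right_inverse'
      (hfx.mem_toOpenPartialHomeomorph_source (hf' x) hn)
  refine ((hfx.to_localInverse (hf' x) hn).congr_of_eventuallyEq
    (hright.mono fun y hy => ?_)).contDiffWithinAt
  conv_lhs => rw [← hy]
  exact hg _

end InverseFunction

theorem div_two_mul_sq_add_mul_add_one_pos {a b : ℝ} (h : (a = 0 ∧ b = 0) ∨ b ^ 2 < 2 * a)
    (t : ℝ) : 0 < a / 2 * t ^ 2 + b * t + 1 := by
  rcases h with ⟨rfl, rfl⟩ | h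
  · norm_num
  · nlinarith [sq_nonneg b, sq_nonneg (a * t + b)]

noncomputable def shearEquiv (a b : ℝ) (ha : a ≠ 0) : (ℝ × ℝ) ≃L[ℝ] ℝ × ℝ :=
  ContinuousLinearEquiv.equivOfInverse
    ((a • ContinuousLinearMap.fst ℝ ℝ ℝ + b • ContinuousLinearMap.snd ℝ ℝ ℝ).prod
      (ContinuousLinearMap.snd ℝ ℝ ℝ))
    ((a⁻¹ • (ContinuousLinearMap.fst ℝ ℝ ℝ - b • ContinuousLinearMap.snd ℝ ℝ ℝ)).prod
      (ContinuousLinearMap.snd ℝ ℝ ℝ))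
    (fun p => by ext <;> simp [ha])
    (fun p => by ext <;> simp [ha])

@[simp] theorem shearEquiv_apply (a b : ℝ) (ha : a ≠ 0) (p : ℝ × ℝ) :
    shearEquiv a b ha p = (a * p.1 + b * p.2, p.2) := rfl

noncomputable def charX (A B : ℝ → ℝ) (s t : ℝ) : ℝ := A s / 2 * t ^ 2 + B s * t + s

noncomputable def charMap (A B : ℝ → ℝ) (p : ℝ × ℝ) : ℝ × ℝ := (charX A B p.1 p.2, p.2)

section Characteristics

variable {A B : ℝ → ℝ}

@[simp] theorem charX_zero (s : ℝ) : charX A B s 0 = s := by simp [charX]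

theorem hasDerivAt_charX (s t : ℝ) : HasDerivAt (charX A B s) (A s * t + B s) t := by
  refine (((hasDerivAt_pow 2 t).const_mul (A s / 2)).add
    ((hasDerivAt_id t).const_mul (B s))).add_const s |>.congr_deriv ?_
  push_cast
  ring

theorem hasDerivAt_charX_left {s : ℝ} (hA : DifferentiableAt ℝ A s)
    (hB : DifferentiableAt ℝ B s) (t : ℝ) :
    HasDerivAt (fun s => charX A B s t) (deriv A s / 2 * t ^ 2 + deriv B s * t + 1) s :=
  (((hA.hasDerivAt.div_const 2).mul_const (t ^ 2)).add (hB.hasDerivAt.mul_const t)).add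
    (hasDerivAt_id s)

theorem charMap_injective (hA : Differentiable ℝ A) (hB : Differentiable ℝ B)
    (hJ : ∀ s t, 0 < deriv A s / 2 * t ^ 2 + deriv B s * t + 1) :
    Function.Injective (charMap A B) := by
  rintro ⟨s, t⟩ ⟨s', t'⟩ h
  simp only [charMap, Prod.mk.injEq] at h
  obtain ⟨hx, rfl⟩ := h
  have hmono : StrictMono fun s => charX A B s t := strictMono_of_deriv_pos fun s => by
    rw [(hasDerivAt_charX_left (hA s) (hB s) t).deriv]
    exact hJ s t
  rw [hmono.injective hx]

theorem hasFDerivAt_charMap {s t : ℝ} (hA : DifferentiableAt ℝ A s)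
    (hB : DifferentiableAt ℝ B s) (hJ : 0 < deriv A s / 2 * t ^ 2 + deriv B s * t + 1) :
    HasFDerivAt (charMap A B)
      (shearEquiv _ (A s * t + B s) hJ.ne' : (ℝ × ℝ) →L[ℝ] ℝ × ℝ) (s, t) := by
  have hA' := hA.hasDerivAt.comp_hasFDerivAt (s, t) (hasFDerivAt_fst (𝕜 := ℝ) (p := (s, t)))
  have hB' := hB.hasDerivAt.comp_hasFDerivAt (s, t) (hasFDerivAt_fst (𝕜 := ℝ) (p := (s, t)))
  have hsnd := hasFDerivAt_snd (𝕜 := ℝ) (p := (s, t))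
  refine (((((hA'.mul_const 2⁻¹).mul (hsnd.pow 2)).add (hB'.mul hsnd)).add hasFDerivAt_fst).prodMk
    hsnd).congr_fderiv ?_
  ext <;> simp <;> ring

theorem ContDiff.charMap {n : WithTop ℕ∞} (hA : ContDiff ℝ n A) (hB : ContDiff ℝ n B) :
    ContDiff ℝ n (charMap A B) :=
  (((((hA.comp contDiff_fst).div_const 2).mul (contDiff_snd.pow 2)).add
    ((hB.comp contDiff_fst).mul contDiff_snd)).add contDiff_fst).prodMk contDiff_snd

end Characteristics

section Existence

variable {A B : ℝ → ℝ} {u : ℝ × ℝ → ℝ} (huX : ∀ s t, u (charX A B s t, t) = A s * t + B s)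
include huX

theorem hasDerivAt_Lop_charX {w : ℝ × ℝ → ℝ} {s t : ℝ}
    (hw : DifferentiableAt ℝ w (charX A B s t, t)) :
    HasDerivAt (fun t => w (charX A B s t, t)) (Lop u w (charX A B s t, t)) t := by
  have h := hasDerivAt_comp_graph_s11 (hasDerivAt_charX s t) hw
  rwa [← huX] at h

variable {Ω : Set (ℝ × ℝ)} (hΩ : IsOpen Ω) (hu : ContDiffOn ℝ 2 u Ω)
  (hmem : ∀ s t, (charX A B s t, t) ∈ Ω)
include hΩ hu hmem

theorem Lop_self_charX (s t : ℝ) : Lop u u (charX A B s t, t) = A s := by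
  refine (hasDerivAt_Lop_charX huX ((hu.differentiableOn two_ne_zero).differentiableAt
    (hΩ.mem_nhds (hmem s t)))).unique ?_
  simp_rw [huX]
  simpa using ((hasDerivAt_id t).const_mul (A s)).add_const (B s)

theorem Lop_Lop_charX (s t : ℝ) : Lop u (Lop u u) (charX A B s t, t) = 0 := by
  have hLu : ContDiffOn ℝ 1 (Lop u u) Ω := hu.Lop (hu.of_le one_le_two) hΩ le_rfl
  refine (hasDerivAt_Lop_charX huX ((hLu.differentiableOn one_ne_zero).differentiableAt
    (hΩ.mem_nhds (hmem s t)))).unique ?_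
  simp_rw [Lop_self_charX huX hΩ hu hmem s]
  exact hasDerivAt_const t (A s)

end Existence

theorem stmt11 (A B : ℝ → ℝ) (hA : ContDiff ℝ 2 A) (hB : ContDiff ℝ 2 B)
    (hcond : ∀ s : ℝ, (deriv A s = 0 ∧ deriv B s = 0) ∨ (deriv B s) ^ 2 < 2 * deriv A s)
    (F : ℝ × ℝ → ℝ × ℝ)
    (hF : ∀ s t : ℝ, F (s, t) = (A s / 2 * t ^ 2 + B s * t + s, t))
    (Ω : Set (ℝ × ℝ)) (hΩ : Ω = Set.range F)
    (c : ℝ × ℝ → ℝ) (hc : ∀ p ∈ Ω, F (c p, p.2) = p)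
    (u : ℝ × ℝ → ℝ) (hu : ∀ p : ℝ × ℝ, u p = A (c p) * p.2 + B (c p)) :
    ContDiffOn ℝ 2 u Ω ∧
    (∀ p ∈ Ω, Lop u (Lop u u) p = 0) ∧
    (∀ x : ℝ, u (x, 0) = B x) ∧
    (∀ x : ℝ, Lop u u (x, 0) = A x) ∧
    (∀ v : ℝ × ℝ → ℝ, ContDiffOn ℝ 2 v Ω → (∀ p ∈ Ω, Lop v (Lop v v) p = 0) →
      (∀ x : ℝ, v (x, 0) = B x) → (∀ x : ℝ, Lop v v (x, 0) = A x) →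
      Set.EqOn u v Ω) := by
  obtain rfl : F = charMap A B := funext fun p => hF p.1 p.2
  subst hΩ
  have hJ s := div_two_mul_sq_add_mul_add_one_pos (hcond s)
  have hA₁ := hA.differentiable two_ne_zero
  have hB₁ := hB.differentiable two_ne_zero
  have hF' (p : ℝ × ℝ) := hasFDerivAt_charMap (hA₁ p.1) (hB₁ p.1) (hJ p.1 p.2)
  have hΩ := (hA.charMap hB).isOpen_range_of_hasFDerivAt_equiv hF' two_ne_zero
  have hmem s t : (charX A B s t, t) ∈ range (charMap A B) := mem_range_self (s, t)
  have hcX s t : c (charX A B s t, t) = s :=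
    congrArg Prod.fst (charMap_injective hA₁ hB₁ hJ (hc _ (mem_range_self (s, t))))
  have hcC : ContDiffOn ℝ 2 c (range (charMap A B)) :=
    ((hA.charMap hB).contDiffOn_range_of_leftInverse hF' two_ne_zero
      (g := fun p => (c p, p.2)) fun p => by simp [charMap, hcX]).fst
  have huC : ContDiffOn ℝ 2 u (range (charMap A B)) := by
    rw [funext hu]
    exact ((hA.comp_contDiffOn hcC).mul contDiffOn_snd).add (hB.comp_contDiffOn hcC)
  have huX s t : u (charX A B s t, t) = A s * t + B s := by simp [hu, hcX]
  refine ⟨huC, ?_, fun x => by simpa using huX x 0,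
    fun x => by simpa using Lop_self_charX huX hΩ huC hmem x 0, ?_⟩
  · rintro _ ⟨⟨s, t⟩, rfl⟩
    exact Lop_Lop_charX huX hΩ huC hmem s t
  · rintro v hv hvv hv₀ hvv₀ _ ⟨⟨s, t⟩, rfl⟩
    exact (huX s t).trans (apply_graph_eq_of_Lop_Lop_eq_zero hΩ hv hvv (hmem s)
      (hasDerivAt_charX s) (by simpa using hv₀ s) (by simpa using hvv₀ s) t).symm
end
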